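/- Let A be an alternating Büchi automaton and let B be the nondeterministic Büchi automaton obtained from A by the breakpoint (Miyano–Hayashi) construction for removing alternation. Then A is ∃GFG if and only if B is GFG. -/

import Mathlib

set_option autoImplicit false
set_option linter.unusedVariables false

/-! ### Positive Boolean formulas -/

inductive PosBool (Q : Type) : Type
  | atom : Q → PosBool Q
  | and : PosBool Q → PosBool Q → PosBool Q
  | or : PosBool Q → PosBool Q → PosBool Q

namespace PosBool

variable {Q : Type}

/-- The possible outcomes of Eve resolving all the disjunctions of a positive
Boolean formula: each element of `eveRes φ` is the set of atoms that Adam can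
reach (by resolving the conjunctions) against that fixed resolution of Eve.
These are exactly the `q`-boxes of the one-step game over the formula `φ`. -/
def eveRes : PosBool Q → Set (Set Q)
  | atom q => {{q}}
  | and f g => {s | ∃ u ∈ eveRes f, ∃ v ∈ eveRes g, s = u ∪ v}
  | or f g => eveRes f ∪ eveRes g

/-- The dual formula: swap disjunctions and conjunctions. -/
def dual : PosBool Q → PosBool Q
  | atom q => atom q
  | and f g => or (dual f) (dual g)
  | or f g => and (dual f) (dual g)

/-- Length (number of nodes) of a formula. -/
def size : PosBool Q → ℕ
  | atom _ => 1
  | and f g => size f + size g + 1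
  | or f g => size f + size g + 1

/-- Atoms occurring in a formula. -/
def atoms : PosBool Q → Set Q
  | atom q => {q}
  | and f g => atoms f ∪ atoms g
  | or f g => atoms f ∪ atoms g

/-- A purely conjunctive formula (no disjunctions). -/
def NoOr : PosBool Q → Prop
  | atom _ => True
  | and f g => NoOr f ∧ NoOr g
  | or _ _ => False

/-- A purely disjunctive formula (no conjunctions). -/
def NoAnd : PosBool Q → Prop
  | atom _ => True
  | and _ _ => False
  | or f g => NoAnd f ∧ NoAnd g

/-- Disjunctive normal form: a disjunction of conjunctions. -/
def IsDNF : PosBool Q → Prop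
  | or f g => IsDNF f ∧ IsDNF g
  | φ => NoOr φ

end PosBool

/-! ### Acceptance conditions -/

/-- `c` appears infinitely often in `f`. -/
def InfOften (f : ℕ → ℕ) (c : ℕ) : Prop := ∀ n, ∃ m, n ≤ m ∧ f m = c

/-- The parity condition: the highest value appearing infinitely often is even. -/
def ParityAccept (f : ℕ → ℕ) : Prop :=
  ∃ c, Even c ∧ InfOften f c ∧ ∀ d, InfOften f d → d ≤ c

/-- The sequence `ρ` visits the set `S` infinitely often. -/
def InfOftenIn {T : Type} (ρ : ℕ → T) (S : Set T) : Prop := ∀ n, ∃ m, n ≤ m ∧ ρ m ∈ S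

/-- A Rabin (or Streett) pair of sets of transitions. -/
structure RabinPair (T : Type) where
  bad : Set T
  good : Set T

/-- The Rabin condition for pairs `⟨B_i, G_i⟩`, `i < k`: for some `i`,
`inf(ρ) ∩ B_i = ∅` and `inf(ρ) ∩ G_i ≠ ∅`. -/
def RabinAccept {T : Type} {k : ℕ} (pairs : Fin k → RabinPair T) (ρ : ℕ → T) : Prop :=
  ∃ i, ¬ InfOftenIn ρ (pairs i).bad ∧ InfOftenIn ρ (pairs i).good

/-- The Streett condition for pairs `⟨B_i, G_i⟩`, `i < k`: for every `i`,
`inf(ρ) ∩ B_i = ∅` or `inf(ρ) ∩ G_i ≠ ∅`. -/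
def StreettAccept {T : Type} {k : ℕ} (pairs : Fin k → RabinPair T) (ρ : ℕ → T) : Prop :=
  ∀ i, ¬ InfOftenIn ρ (pairs i).bad ∨ InfOftenIn ρ (pairs i).good

/-! ### Generic two-player games of infinite duration.

A game proceeds in rounds; in each round, from the current game state, up to
six moves are played in alternation: Adam moves first (`a1`), then Eve (`e1`),
then Adam (`a2`), then Eve (`e2`), then Adam (`a3`), then Eve (`e3`).
(Unused phases are modelled by the type `Unit`.)  Strategies may use the full
history of the play (the list of previous complete rounds) as well as the moves
already played in the current round.  Eve wins an infinite play iff the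
sequence of rounds satisfies the winning condition `win`. -/

structure GameRound (St α1 β1 α2 β2 α3 β3 : Type) where
  st : St
  a1 : α1
  e1 : β1
  a2 : α2
  e2 : β2
  a3 : α3
  e3 : β3

structure Game (St α1 β1 α2 β2 α3 β3 : Type) where
  init : St
  A1 : St → Set α1
  E1 : St → α1 → Set β1
  A2 : St → α1 → β1 → Set α2
  E2 : St → α1 → β1 → α2 → Set β2
  A3 : St → α1 → β1 → α2 → β2 → Set α3
  E3 : St → α1 → β1 → α2 → β2 → α3 → Set β3
  next : St → α1 → β1 → α2 → β2 → α3 → β3 → St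
  win : (ℕ → GameRound St α1 β1 α2 β2 α3 β3) → Prop

namespace Game

variable {St α1 β1 α2 β2 α3 β3 : Type}

/-- The states along the play are correctly updated. -/
def StateOk (G : Game St α1 β1 α2 β2 α3 β3) (ρ : ℕ → GameRound St α1 β1 α2 β2 α3 β3) : Prop :=
  (ρ 0).st = G.init ∧
  ∀ n, (ρ (n+1)).st = G.next (ρ n).st (ρ n).a1 (ρ n).e1 (ρ n).a2 (ρ n).e2 (ρ n).a3 (ρ n).e3

/-- Round `n` of the play is entirely legal. -/
def RoundLegal (G : Game St α1 β1 α2 β2 α3 β3) (ρ : ℕ → GameRound St α1 β1 α2 β2 α3 β3)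
    (n : ℕ) : Prop :=
  (ρ n).a1 ∈ G.A1 (ρ n).st ∧
  (ρ n).e1 ∈ G.E1 (ρ n).st (ρ n).a1 ∧
  (ρ n).a2 ∈ G.A2 (ρ n).st (ρ n).a1 (ρ n).e1 ∧
  (ρ n).e2 ∈ G.E2 (ρ n).st (ρ n).a1 (ρ n).e1 (ρ n).a2 ∧
  (ρ n).a3 ∈ G.A3 (ρ n).st (ρ n).a1 (ρ n).e1 (ρ n).a2 (ρ n).e2 ∧
  (ρ n).e3 ∈ G.E3 (ρ n).st (ρ n).a1 (ρ n).e1 (ρ n).a2 (ρ n).e2 (ρ n).a3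

/-- All rounds before round `n` are entirely legal. -/
def Hleg (G : Game St α1 β1 α2 β2 α3 β3) (ρ : ℕ → GameRound St α1 β1 α2 β2 α3 β3)
    (n : ℕ) : Prop :=
  ∀ m, m < n → RoundLegal G ρ m

/-- Eve wins the play `ρ`: she is never the first player to make an illegal
move (the moves of each round are ordered `a1, e1, a2, e2, a3, e3`), and if all
moves are legal then the play satisfies the winning condition. -/
def EveWinsPlay (G : Game St α1 β1 α2 β2 α3 β3)
    (ρ : ℕ → GameRound St α1 β1 α2 β2 α3 β3) : Prop :=
  (∀ n, Hleg G ρ n → (ρ n).a1 ∈ G.A1 (ρ n).st →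
      (ρ n).e1 ∈ G.E1 (ρ n).st (ρ n).a1) ∧
  (∀ n, Hleg G ρ n → (ρ n).a1 ∈ G.A1 (ρ n).st →
      (ρ n).e1 ∈ G.E1 (ρ n).st (ρ n).a1 →
      (ρ n).a2 ∈ G.A2 (ρ n).st (ρ n).a1 (ρ n).e1 →
      (ρ n).e2 ∈ G.E2 (ρ n).st (ρ n).a1 (ρ n).e1 (ρ n).a2) ∧
  (∀ n, Hleg G ρ n → (ρ n).a1 ∈ G.A1 (ρ n).st →
      (ρ n).e1 ∈ G.E1 (ρ n).st (ρ n).a1 →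
      (ρ n).a2 ∈ G.A2 (ρ n).st (ρ n).a1 (ρ n).e1 →
      (ρ n).e2 ∈ G.E2 (ρ n).st (ρ n).a1 (ρ n).e1 (ρ n).a2 →
      (ρ n).a3 ∈ G.A3 (ρ n).st (ρ n).a1 (ρ n).e1 (ρ n).a2 (ρ n).e2 →
      (ρ n).e3 ∈ G.E3 (ρ n).st (ρ n).a1 (ρ n).e1 (ρ n).a2 (ρ n).e2 (ρ n).a3) ∧
  ((∀ n, RoundLegal G ρ n) → G.win ρ)

/-- Adam wins the play `ρ`: he is never the first player to make an illegal
move, and if all moves are legal then the play violates the (Eve) winning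
condition. -/
def AdamWinsPlay (G : Game St α1 β1 α2 β2 α3 β3)
    (ρ : ℕ → GameRound St α1 β1 α2 β2 α3 β3) : Prop :=
  (∀ n, Hleg G ρ n → (ρ n).a1 ∈ G.A1 (ρ n).st) ∧
  (∀ n, Hleg G ρ n → (ρ n).a1 ∈ G.A1 (ρ n).st →
      (ρ n).e1 ∈ G.E1 (ρ n).st (ρ n).a1 →
      (ρ n).a2 ∈ G.A2 (ρ n).st (ρ n).a1 (ρ n).e1) ∧
  (∀ n, Hleg G ρ n → (ρ n).a1 ∈ G.A1 (ρ n).st →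
      (ρ n).e1 ∈ G.E1 (ρ n).st (ρ n).a1 →
      (ρ n).a2 ∈ G.A2 (ρ n).st (ρ n).a1 (ρ n).e1 →
      (ρ n).e2 ∈ G.E2 (ρ n).st (ρ n).a1 (ρ n).e1 (ρ n).a2 →
      (ρ n).a3 ∈ G.A3 (ρ n).st (ρ n).a1 (ρ n).e1 (ρ n).a2 (ρ n).e2) ∧
  ((∀ n, RoundLegal G ρ n) → ¬ G.win ρ)

/-- The history of a play before round `n`: the list of the first `n` rounds. -/
def hist (ρ : ℕ → GameRound St α1 β1 α2 β2 α3 β3) (n : ℕ) : List (GameRound St α1 β1 α2 β2 α3 β3) :=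
  (List.range n).map ρ

/-- A strategy of Eve: for each of her three moves in a round, a choice
depending on the history, the current state, and the moves already played
in the current round. -/
structure EStrat (St α1 β1 α2 β2 α3 β3 : Type) where
  f1 : List (GameRound St α1 β1 α2 β2 α3 β3) → St → α1 → β1
  f2 : List (GameRound St α1 β1 α2 β2 α3 β3) → St → α1 → β1 → α2 → β2
  f3 : List (GameRound St α1 β1 α2 β2 α3 β3) → St → α1 → β1 → α2 → β2 → α3 → β3

/-- A strategy of Adam. -/
structure AStrat (St α1 β1 α2 β2 α3 β3 : Type) where
  g1 : List (GameRound St α1 β1 α2 β2 α3 β3) → St → α1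
  g2 : List (GameRound St α1 β1 α2 β2 α3 β3) → St → α1 → β1 → α2
  g3 : List (GameRound St α1 β1 α2 β2 α3 β3) → St → α1 → β1 → α2 → β2 → α3

/-- The play `ρ` is consistent with the strategy `σ` of Eve. -/
def ConsE (σ : EStrat St α1 β1 α2 β2 α3 β3) (ρ : ℕ → GameRound St α1 β1 α2 β2 α3 β3) : Prop :=
  ∀ n, (ρ n).e1 = σ.f1 (hist ρ n) (ρ n).st (ρ n).a1 ∧
       (ρ n).e2 = σ.f2 (hist ρ n) (ρ n).st (ρ n).a1 (ρ n).e1 (ρ n).a2 ∧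
       (ρ n).e3 = σ.f3 (hist ρ n) (ρ n).st (ρ n).a1 (ρ n).e1 (ρ n).a2 (ρ n).e2 (ρ n).a3

/-- The play `ρ` is consistent with the strategy `τ` of Adam. -/
def ConsA (τ : AStrat St α1 β1 α2 β2 α3 β3) (ρ : ℕ → GameRound St α1 β1 α2 β2 α3 β3) : Prop :=
  ∀ n, (ρ n).a1 = τ.g1 (hist ρ n) (ρ n).st ∧
       (ρ n).a2 = τ.g2 (hist ρ n) (ρ n).st (ρ n).a1 (ρ n).e1 ∧
       (ρ n).a3 = τ.g3 (hist ρ n) (ρ n).st (ρ n).a1 (ρ n).e1 (ρ n).a2 (ρ n).e2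

/-- `σ` is a winning strategy for Eve: every play consistent with `σ` is won
by Eve. -/
def EveWinningStrat (G : Game St α1 β1 α2 β2 α3 β3) (σ : EStrat St α1 β1 α2 β2 α3 β3) : Prop :=
  ∀ ρ, StateOk G ρ → ConsE σ ρ → EveWinsPlay G ρ

/-- Eve wins the game `G`. -/
def EveWins (G : Game St α1 β1 α2 β2 α3 β3) : Prop := ∃ σ, EveWinningStrat G σ

/-- `τ` is a winning strategy for Adam: every play consistent with `τ` is won
by Adam. -/
def AdamWinningStrat (G : Game St α1 β1 α2 β2 α3 β3) (τ : AStrat St α1 β1 α2 β2 α3 β3) : Prop :=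
  ∀ ρ, StateOk G ρ → ConsA τ ρ → AdamWinsPlay G ρ

/-- Adam wins the game `G`. -/
def AdamWins (G : Game St α1 β1 α2 β2 α3 β3) : Prop := ∃ τ, AdamWinningStrat G τ

end Game
/-! ### Alternating automata on infinite words -/

/-- An alternating automaton over the alphabet `A`: a set of states, an initial
state, a transition function assigning to each state and letter a positive
Boolean formula over the states, and an acceptance condition `acc` on infinite
sequences of transitions `(q_n, a_n, q_{n+1})`. -/
structure AltAut (A : Type) where
  Q : Type
  init : Q
  delta : Q → A → PosBool Q
  acc : (ℕ → Q × A × Q) → Prop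

namespace AltAut

variable {A : Type}

/-- `M` is a parity automaton with priority labelling `p`. -/
def IsParity (M : AltAut A) (p : M.Q → A → M.Q → ℕ) : Prop :=
  ∀ ρ, M.acc ρ ↔ ParityAccept fun n => p (ρ n).1 (ρ n).2.1 (ρ n).2.2

/-- `M` is a Rabin automaton with the Rabin pairs `pairs`. -/
def IsRabin (M : AltAut A) {k : ℕ} (pairs : Fin k → RabinPair (M.Q × A × M.Q)) : Prop :=
  ∀ ρ, M.acc ρ ↔ RabinAccept pairs ρ

/-- `M` is a Streett automaton with the Streett pairs `pairs`. -/
def IsStreett (M : AltAut A) {k : ℕ} (pairs : Fin k → RabinPair (M.Q × A × M.Q)) : Prop :=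
  ∀ ρ, M.acc ρ ↔ StreettAccept pairs ρ

/-- `M` is a Büchi automaton with accepting transitions `F`. -/
def IsBuchi (M : AltAut A) (F : Set (M.Q × A × M.Q)) : Prop :=
  ∀ ρ, M.acc ρ ↔ InfOftenIn ρ F

/-- `M` is a weak automaton (with parity labelling `p`): every path following
transitions of the automaton eventually remains in a single priority. -/
def IsWeak (M : AltAut A) (p : M.Q → A → M.Q → ℕ) : Prop :=
  M.IsParity p ∧
  ∀ ρ : ℕ → M.Q × A × M.Q,
    (∀ n, (ρ n).2.2 = (ρ (n+1)).1 ∧ (ρ n).2.2 ∈ PosBool.atoms (M.delta (ρ n).1 (ρ n).2.1)) →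
    ∃ N c, ∀ n, N ≤ n → p (ρ n).1 (ρ n).2.1 (ρ n).2.2 = c

/-- `M` is nondeterministic: all transition conditions are disjunctive. -/
def IsNondet (M : AltAut A) : Prop := ∀ q a, (M.delta q a).NoAnd

/-- `M` is universal: all transition conditions are conjunctive. -/
def IsUniversal (M : AltAut A) : Prop := ∀ q a, (M.delta q a).NoOr

/-- The dual automaton: swap disjunctions and conjunctions, and dualise the
acceptance condition. -/
def dual (M : AltAut A) : AltAut A where
  Q := M.Q
  init := M.init
  delta q a := (M.delta q a).dual
  acc ρ := ¬ M.acc ρ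

/-- The model-checking (acceptance) game of `M` over the word `w`.  A round
from state `q` at step `n`: Eve resolves the disjunctions of `δ(q, w_n)`
(choosing an element of `eveRes`), and Adam resolves the conjunctions
(choosing a state in that set).  Eve wins iff the resulting path of
transitions is accepting. -/
def mcGame (M : AltAut A) (w : ℕ → A) :
    Game (ℕ × M.Q) Unit (Set M.Q) M.Q Unit Unit Unit where
  init := (0, M.init)
  A1 _ := Set.univ
  E1 p _ := PosBool.eveRes (M.delta p.2 (w p.1))
  A2 _ _ S := S
  E2 _ _ _ _ := Set.univ
  A3 _ _ _ _ _ := Set.univ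
  E3 _ _ _ _ _ _ := Set.univ
  next p _ _ q' _ _ _ := (p.1 + 1, q')
  win ρ := M.acc fun n => ((ρ n).st.2, w n, (ρ n).a2)

/-- The language of `M`: the words for which Eve wins the model-checking game. -/
def Lang (M : AltAut A) : Set (ℕ → A) := {w | Game.EveWins (M.mcGame w)}

/-- Eve's letter game on `M`: Adam picks a letter, then the one-step formula is
resolved (Eve the disjunctions, Adam the conjunctions).  Eve wins iff the word
played is not in `L(M)` or the path produced is accepting. -/
def eLetterGame (M : AltAut A) : Game M.Q A (Set M.Q) M.Q Unit Unit Unit where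
  init := M.init
  A1 _ := Set.univ
  E1 q a := PosBool.eveRes (M.delta q a)
  A2 _ _ S := S
  E2 _ _ _ _ := Set.univ
  A3 _ _ _ _ _ := Set.univ
  E3 _ _ _ _ _ _ := Set.univ
  next _ _ _ q' _ _ _ := q'
  win ρ := (fun n => (ρ n).a1) ∉ M.Lang ∨ M.acc fun n => ((ρ n).st, (ρ n).a1, (ρ n).a2)

/-- Adam's letter game on `M`: Eve picks a letter and resolves the disjunctions
of the one-step formula, Adam resolves the conjunctions.  Adam wins iff the
word played is in `L(M)` or the path produced is rejecting; accordingly the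
condition `win` (for Eve) is that the word is not in `L(M)` and the path is
accepting. -/
def aLetterGame (M : AltAut A) : Game M.Q Unit (A × Set M.Q) M.Q Unit Unit Unit where
  init := M.init
  A1 _ := Set.univ
  E1 q _ := {m : A × Set M.Q | m.2 ∈ PosBool.eveRes (M.delta q m.1)}
  A2 _ _ m := m.2
  E2 _ _ _ _ := Set.univ
  A3 _ _ _ _ _ := Set.univ
  E3 _ _ _ _ _ _ := Set.univ
  next _ _ _ q' _ _ _ := q'
  win ρ := (fun n => (ρ n).e1.1) ∉ M.Lang ∧ M.acc fun n => ((ρ n).st, (ρ n).e1.1, (ρ n).a2)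

/-- `M` is ∃GFG: Eve wins her letter game. -/
def ExistsGFG (M : AltAut A) : Prop := Game.EveWins M.eLetterGame

/-- `M` is ∀GFG: Adam wins his letter game. -/
def ForallGFG (M : AltAut A) : Prop := Game.AdamWins M.aLetterGame

/-- `M` is good-for-games: it is both ∃GFG and ∀GFG. -/
def GFG (M : AltAut A) : Prop := M.ExistsGFG ∧ M.ForallGFG

/-- `b` is a box of `M` over the letter `a`: a simultaneous resolution, for
every state `q`, of the disjunctions of `δ(q, a)`; `b q` is the set of states
Adam can reach from `q` against this resolution. -/
def IsBox (M : AltAut A) (a : A) (b : M.Q → Set M.Q) : Prop :=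
  ∀ q, b q ∈ PosBool.eveRes (M.delta q a)

/-- The boxes of `M` (over all letters), as an alphabet. -/
def Boxes (M : AltAut A) : Type := {β : A × (M.Q → Set M.Q) // M.IsBox β.1 β.2}

/-- A sequence of (letter, box) pairs is universally accepting for `M` if every
path through it starting at the initial state is accepting. -/
def UnivAcceptingRaw (M : AltAut A) (u : ℕ → A × (M.Q → Set M.Q)) : Prop :=
  ∀ ρ : ℕ → M.Q, ρ 0 = M.init → (∀ n, ρ (n+1) ∈ (u n).2 (ρ n)) →
    M.acc fun n => (ρ n, (u n).1, ρ (n+1))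

/-- The set of universally accepting words over the alphabet of boxes of `M`. -/
def UnivAccLang (M : AltAut A) : Set (ℕ → M.Boxes) :=
  {u | M.UnivAcceptingRaw fun n => (u n).val}

/-- The size of an automaton: the maximum of the size of the alphabet, the
number of states and the total length of the transition conditions. -/
noncomputable def sizeN (M : AltAut A) : ℕ :=
  max (Nat.card A) (max (Nat.card M.Q) (∑ᶠ q : M.Q, ∑ᶠ a : A, (M.delta q a).size))

/-- The two-token game `G₂(M)` on an alternating automaton `M`.  A configuration
is a triple of states `(p, q₁, q₂)`; in each turn Adam picks a letter `a`, the
players resolve `δ_M(p, a)` (Eve the disjunctions, Adam the conjunctions),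
producing a transition of Eve's token, and then resolve `δ_{M̄}(q₁, a)` and
`δ_{M̄}(q₂, a)` in the dual automaton (Adam the disjunctions, Eve the
conjunctions), producing transitions of Adam's two tokens.  Eve wins iff her
path is accepting in `M`, or both of Adam's paths are rejecting in `M`. -/
def G2 (M : AltAut A) :
    Game (M.Q × M.Q × M.Q) A (Set M.Q) (M.Q × Set M.Q × Set M.Q) (M.Q × M.Q) Unit Unit where
  init := (M.init, M.init, M.init)
  A1 _ := Set.univ
  E1 c a := PosBool.eveRes (M.delta c.1 a)
  A2 c a S := {m | m.1 ∈ S ∧ m.2.1 ∈ PosBool.eveRes (M.dual.delta c.2.1 a) ∧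
                   m.2.2 ∈ PosBool.eveRes (M.dual.delta c.2.2 a)}
  E2 _ _ _ m := {x | x.1 ∈ m.2.1 ∧ x.2 ∈ m.2.2}
  A3 _ _ _ _ _ := Set.univ
  E3 _ _ _ _ _ _ := Set.univ
  next c _ _ m x _ _ := (m.1, x.1, x.2)
  win ρ :=
    M.acc (fun n => ((ρ n).st.1, (ρ n).a1, (ρ n).a2.1)) ∨
    (¬ M.acc (fun n => ((ρ n).st.2.1, (ρ n).a1, (ρ n).e2.1)) ∧
     ¬ M.acc (fun n => ((ρ n).st.2.2, (ρ n).a1, (ρ n).e2.2)))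

end AltAut

/-! ### Deterministic and nondeterministic parity automata -/

/-- A deterministic parity automaton over the alphabet `A` (priorities on
transitions). -/
structure DPA (A : Type) where
  S : Type
  init : S
  step : S → A → S
  prio : S → A → ℕ

namespace DPA

variable {A : Type}

/-- The (unique) run of `D` on `w`. -/
def run (D : DPA A) (w : ℕ → A) : ℕ → D.S
  | 0 => D.init
  | n + 1 => D.step (D.run w n) (w n)

/-- The language of `D`. -/
def Lang (D : DPA A) : Set (ℕ → A) :=
  {w | ParityAccept fun n => D.prio (D.run w n) (w n)}

end DPA

/-- A nondeterministic parity automaton over the alphabet `A`, with an abstract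
set `T` of transitions, each with a source, a letter, a destination and a
priority. -/
structure NPA (A : Type) where
  S : Type
  init : S
  T : Type
  src : T → S
  lab : T → A
  dst : T → S
  prio : T → ℕ

namespace NPA

variable {A : Type}

/-- `r` is a run of `N` over `w`. -/
def IsRun (N : NPA A) (w : ℕ → A) (r : ℕ → N.T) : Prop :=
  N.src (r 0) = N.init ∧ (∀ n, N.src (r (n+1)) = N.dst (r n)) ∧ ∀ n, N.lab (r n) = w n

/-- The language of `N`: the words admitting an accepting run. -/
def Lang (N : NPA A) : Set (ℕ → A) :=
  {w | ∃ r, N.IsRun w r ∧ ParityAccept fun n => N.prio (r n)}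

/-- The letter game on `N`: Adam picks letters, Eve picks transitions; Eve wins
iff the word played is not in `L(N)` or her run is accepting. -/
def letterGame (N : NPA A) : Game N.S A N.T Unit Unit Unit Unit where
  init := N.init
  A1 _ := Set.univ
  E1 s a := {t | N.src t = s ∧ N.lab t = a}
  A2 _ _ _ := Set.univ
  E2 _ _ _ _ := Set.univ
  A3 _ _ _ _ _ := Set.univ
  E3 _ _ _ _ _ _ := Set.univ
  next _ _ t _ _ _ _ := N.dst t
  win ρ := (fun n => (ρ n).a1) ∉ N.Lang ∨ ParityAccept fun n => N.prio (ρ n).e1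

/-- `N` is good-for-games. -/
def GFG (N : NPA A) : Prop := Game.EveWins N.letterGame

/-- The two-token game `G₂(N)` on a nondeterministic automaton `N`: Adam picks
a letter, Eve picks a transition for her token, Adam picks transitions for his
two tokens.  Eve wins iff her run is accepting or both of Adam's runs are
rejecting. -/
def G2 (N : NPA A) : Game (N.S × N.S × N.S) A N.T (N.T × N.T) Unit Unit Unit where
  init := (N.init, N.init, N.init)
  A1 _ := Set.univ
  E1 c a := {t | N.src t = c.1 ∧ N.lab t = a}
  A2 c a _ := {m | N.src m.1 = c.2.1 ∧ N.lab m.1 = a ∧ N.src m.2 = c.2.2 ∧ N.lab m.2 = a}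
  E2 _ _ _ _ := Set.univ
  A3 _ _ _ _ _ := Set.univ
  E3 _ _ _ _ _ _ := Set.univ
  next _ _ t m _ _ _ := (N.dst t, N.dst m.1, N.dst m.2)
  win ρ :=
    ParityAccept (fun n => N.prio (ρ n).e1) ∨
    (¬ ParityAccept (fun n => N.prio (ρ n).a2.1) ∧
     ¬ ParityAccept (fun n => N.prio (ρ n).a2.2))

end NPA

/-- The nondeterministic parity automaton `A^□` obtained from an alternating
automaton `M` and a deterministic parity automaton `B` over the alphabet of
boxes of `M`: upon reading a letter `a`, it nondeterministically chooses a box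
of `M` over `a` and follows the transition of `B` over that box. -/
def boxNPA {A : Type} (M : AltAut A) (B : DPA M.Boxes) : NPA A where
  S := B.S
  init := B.init
  T := B.S × M.Boxes
  src t := t.1
  lab t := t.2.val.1
  dst t := B.step t.1 t.2
  prio t := B.prio t.1 t.2

/-! ### Statement 18

Let `A` be an alternating Büchi automaton and let `B` be the nondeterministic
Büchi automaton obtained from `A` by the breakpoint (Miyano–Hayashi)
construction.  Then `A` is ∃GFG iff `B` is GFG. -/

attribute [local instance] Classical.propDecidable

/-- The breakpoint (Miyano–Hayashi) construction: states of `B` are pairs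
`(S, O)` of sets of states of `A`, where `S` tracks the set of states Adam's
resolutions of the conjunctions could reach under Eve's current resolution of
the disjunctions, and `O` tracks the states that still owe a visit to an
accepting transition since the last breakpoint.  The nondeterminism of `B`
corresponds to Eve's choice of a box (a simultaneous resolution of the
disjunctions for all states); a transition is accepting (Büchi, encoded with
priorities `{1, 2}`) exactly when `O` becomes empty (a breakpoint), in which
case `O` is reset to the new `S`. -/
noncomputable def breakpointNBW {Alph : Type} (M : AltAut Alph) (F : Set (M.Q × Alph × M.Q)) :
    NPA Alph where
  S := Set M.Q × Set M.Q
  init := ({M.init}, ∅)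
  T := (Set M.Q × Set M.Q) × M.Boxes
  src t := t.1
  lab t := t.2.val.1
  dst t :=
    let S' := {q' | ∃ q ∈ t.1.1, q' ∈ t.2.val.2 q}
    let O' := {q' | ∃ q ∈ t.1.2, q' ∈ t.2.val.2 q ∧ (q, t.2.val.1, q') ∉ F}
    (S', if O' = ∅ then S' else O')
  prio t :=
    if {q' | ∃ q ∈ t.1.2, q' ∈ t.2.val.2 q ∧ (q, t.2.val.1, q') ∉ F} = ∅ then 2 else 1


/-!
Both directions rest on `L(B) = L(A)` and on the boxes Eve picks in `B` being simultaneous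
resolutions of the disjunctions of `A`.

If `B` is GFG, Eve plays in her letter game on `A`, at the current state, the resolution in the box
that her strategy in `B` picks on the word read so far. Her run of `B` is accepting on every word
of `L(B) = L(A)`, and a path of `A` through its boxes must visit `F` between any two breakpoints.

If `A` is ∃GFG, Eve's strategy on `A` depends on the history of the path, so in `B` she runs the
breakpoint construction remembering for each state of `S` the history of one path reaching it
(through a predecessor in `O` reached outside `F` whenever possible), and plays the box made of
her choices at these histories. If breakpoints stopped on a word of `L(A)`, the remembered
predecessors in `O` would form an infinite finitely branching forest, and Kőnig's lemma would
give a path consistent with her winning strategy that eventually avoids `F`. The same argument,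
with a winning strategy in the model-checking game, shows `L(A) ⊆ L(B)`.
-/

theorem PosBool.eveRes_nonempty {Q : Type} : ∀ φ : PosBool Q, φ.eveRes.Nonempty
  | .atom q => ⟨{q}, rfl⟩
  | .and f g =>
    let ⟨u, hu⟩ := eveRes_nonempty f
    let ⟨v, hv⟩ := eveRes_nonempty g
    ⟨u ∪ v, u, hu, v, hv, rfl⟩
  | .or f _ => (eveRes_nonempty f).mono Set.subset_union_left

noncomputable def PosBool.eveResOr {Q : Type} (φ : PosBool Q) (s : Set Q) : Set Q :=
  if s ∈ φ.eveRes then s else φ.eveRes_nonempty.some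

theorem PosBool.eveResOr_mem {Q : Type} (φ : PosBool Q) (s : Set Q) : φ.eveResOr s ∈ φ.eveRes := by
  unfold eveResOr
  split_ifs with h
  exacts [h, φ.eveRes_nonempty.some_mem]

theorem PosBool.eveResOr_of_mem {Q : Type} {φ : PosBool Q} {s : Set Q} (h : s ∈ φ.eveRes) :
    φ.eveResOr s = s :=
  if_pos h

theorem parityAccept_ite_iff {T : Type} (r : ℕ → T) (B : Set T) [DecidablePred (· ∈ B)] :
    ParityAccept (fun n => if r n ∈ B then 2 else 1) ↔ InfOftenIn r B := by
  constructor
  · rintro ⟨c, hc, hinf, -⟩ n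
    obtain ⟨m, hm, hrm⟩ := hinf n
    refine ⟨m, hm, by_contra fun h => ?_⟩
    simp only [h, if_false] at hrm
    exact Nat.not_even_one (hrm ▸ hc)
  · intro h
    refine ⟨2, even_two, fun n => ?_, fun d hd => ?_⟩
    · obtain ⟨m, hm, hrm⟩ := h n
      exact ⟨m, hm, if_pos hrm⟩
    · obtain ⟨m, -, hm⟩ := hd 0
      dsimp only at hm
      split_ifs at hm <;> omega

section Konig

variable {Q : Type} (par : ℕ → Q → Q)

/-- `ancestor par i k q` is the ancestor at level `i` of the node `q` at level `i + k` of the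
forest in which the parent of a node `q` at level `n + 1` is `par n q`. -/
def ancestor (i : ℕ) : ℕ → Q → Q
  | 0, q => q
  | k + 1, q => ancestor i k (par (i + k) q)

theorem ancestor_add (i k l : ℕ) (q : Q) :
    ancestor par i (k + l) q = ancestor par i k (ancestor par (i + k) l q) := by
  induction l generalizing q with
  | zero => rfl
  | succ l ih =>
    show ancestor par i (k + l + 1) q = _
    simp only [ancestor, ih, Nat.add_assoc]

variable {par} {V : ℕ → Set Q}

theorem ancestor_mem (hpar : ∀ n, ∀ q ∈ V (n + 1), par n q ∈ V n) (i : ℕ) :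
    ∀ {k : ℕ} {q : Q}, q ∈ V (i + k) → ancestor par i k q ∈ V i
  | 0, _, hq => hq
  | k + 1, q, hq => ancestor_mem hpar i (k := k) (q := par (i + k) q) (hpar _ _ hq)

/-- Kőnig's lemma. -/
theorem exists_branch [Finite Q] (hpar : ∀ n, ∀ q ∈ V (n + 1), par n q ∈ V n)
    (hne : ∀ n, ∃ m, n ≤ m ∧ (V m).Nonempty) :
    ∃ π : ℕ → Q, ∀ n, π n ∈ V n ∧ par n (π (n + 1)) = π n := by
  have : ∀ n, Nonempty (V n) := fun n => by
    obtain ⟨m, hnm, q, hq⟩ := hne n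
    exact ⟨_, ancestor_mem hpar n (k := m - n) (by rwa [Nat.add_sub_cancel' hnm])⟩
  obtain ⟨f, hf⟩ := exists_seq_forall_proj_of_forall_finite (α := fun n => V n)
    (fun {i j} hij q => ⟨ancestor par i (j - i) q,
      ancestor_mem hpar i (by rw [Nat.add_sub_cancel' hij]; exact q.2)⟩)
    (fun i q => by simp [ancestor])
    (fun i j k hij hjk q => by
      obtain ⟨d, rfl⟩ := Nat.exists_eq_add_of_le hij
      obtain ⟨e, rfl⟩ := Nat.exists_eq_add_of_le hjk
      apply Subtype.ext
      show ancestor par i (i + d - i) (ancestor par (i + d) (i + d + e - (i + d)) q) =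
        ancestor par i (i + d + e - i) q
      rw [Nat.add_sub_cancel_left, Nat.add_sub_cancel_left,
        show i + d + e - i = d + e by omega, ancestor_add])
    (fun i _ => Set.toFinite _)
  refine ⟨fun n => f n, fun n => ⟨(f n).2, ?_⟩⟩
  simpa [ancestor] using congrArg Subtype.val (hf (Nat.le_succ n))

end Konig

namespace Game

variable {St α1 β1 α2 β2 α3 β3 : Type}

theorem hist_succ (ρ : ℕ → GameRound St α1 β1 α2 β2 α3 β3) (n : ℕ) :
    hist ρ (n + 1) = hist ρ n ++ [ρ n] := by
  simp [hist, List.range_succ]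

theorem length_hist (ρ : ℕ → GameRound St α1 β1 α2 β2 α3 β3) (n : ℕ) : (hist ρ n).length = n := by
  simp [hist]

def wordSoFar (h : List (GameRound St α1 β1 α2 β2 α3 β3)) (a : α1) : ℕ → α1 :=
  fun k => (h.map (·.a1)).getD k a

theorem wordSoFar_hist (ρ : ℕ → GameRound St α1 β1 α2 β2 α3 β3) {n k : ℕ} (hk : k ≤ n) :
    wordSoFar (hist ρ n) (ρ n).a1 k = (ρ k).a1 := by
  rcases hk.lt_or_eq with hk | rfl
  · simp [wordSoFar, hist, hk]
  · simp [wordSoFar, hist]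

theorem EveWinsPlay.roundLegal {G : Game St α1 β1 α2 β2 α3 β3}
    {ρ : ℕ → GameRound St α1 β1 α2 β2 α3 β3} (h : G.EveWinsPlay ρ)
    (hA1 : ∀ n, (ρ n).a1 ∈ G.A1 (ρ n).st)
    (hA2 : ∀ n, (ρ n).e1 ∈ G.E1 (ρ n).st (ρ n).a1 →
      (ρ n).a2 ∈ G.A2 (ρ n).st (ρ n).a1 (ρ n).e1)
    (hA3 : ∀ n, (ρ n).a3 ∈ G.A3 (ρ n).st (ρ n).a1 (ρ n).e1 (ρ n).a2 (ρ n).e2) (n : ℕ) :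
    G.RoundLegal ρ n := by
  induction n using Nat.strong_induction_on with
  | _ n ih =>
    have he1 := h.1 n ih (hA1 n)
    have he2 := h.2.1 n ih (hA1 n) he1 (hA2 n he1)
    exact ⟨hA1 n, he1, hA2 n he1, he2, hA3 n,
      h.2.2.1 n ih (hA1 n) he1 (hA2 n he1) he2 (hA3 n)⟩

end Game

namespace NPA

variable {A : Type} (N : NPA A) (σ : Game.EStrat N.S A N.T Unit Unit Unit Unit) (w : ℕ → A)

/-- The state and the history of the letter game on `N` after Adam has played
`w 0, …, w (n - 1)` against `σ`. -/
def simulate : ℕ → N.S × List (GameRound N.S A N.T Unit Unit Unit Unit)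
  | 0 => (N.init, [])
  | n + 1 =>
    let p := simulate n
    let t := σ.f1 p.2 p.1 (w n)
    (N.dst t, p.2 ++ [⟨p.1, w n, t, (), (), (), ()⟩])

def playAgainst (n : ℕ) : GameRound N.S A N.T Unit Unit Unit Unit :=
  ⟨(N.simulate σ w n).1, w n, σ.f1 (N.simulate σ w n).2 (N.simulate σ w n).1 (w n), (), (), (), ()⟩

theorem hist_playAgainst : ∀ n, Game.hist (N.playAgainst σ w) n = (N.simulate σ w n).2
  | 0 => rfl
  | n + 1 => by rw [Game.hist_succ, hist_playAgainst n]; rfl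

variable {w} in
theorem simulate_congr {w' : ℕ → A} : ∀ {n}, (∀ k < n, w k = w' k) →
    N.simulate σ w n = N.simulate σ w' n
  | 0, _ => rfl
  | n + 1, h => by
    simp only [simulate, simulate_congr fun k hk => h k (Nat.lt_succ_of_lt hk), h n n.lt_succ_self]

variable {w} in
theorem playAgainst_congr {w' : ℕ → A} {n : ℕ} (h : ∀ k ≤ n, w k = w' k) :
    N.playAgainst σ w n = N.playAgainst σ w' n := by
  simp only [playAgainst, N.simulate_congr σ fun k hk => h k hk.le, h n le_rfl]

variable {N σ}

theorem eveWinsPlay_playAgainst (hσ : Game.EveWinningStrat N.letterGame σ) :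
    N.letterGame.EveWinsPlay (N.playAgainst σ w) :=
  hσ _ ⟨rfl, fun _ => rfl⟩ fun n => ⟨by rw [hist_playAgainst]; rfl, rfl, rfl⟩

theorem roundLegal_playAgainst (hσ : Game.EveWinningStrat N.letterGame σ) (n : ℕ) :
    N.letterGame.RoundLegal (N.playAgainst σ w) n :=
  (eveWinsPlay_playAgainst w hσ).roundLegal (fun _ => trivial) (fun _ _ => trivial)
    (fun _ => trivial) n

theorem isRun_playAgainst (hσ : Game.EveWinningStrat N.letterGame σ) :
    N.IsRun w fun n => (N.playAgainst σ w n).e1 :=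
  ⟨(roundLegal_playAgainst w hσ 0).2.1.1,
    fun n => (roundLegal_playAgainst w hσ (n + 1)).2.1.1,
    fun n => (roundLegal_playAgainst w hσ n).2.1.2⟩

theorem parityAccept_playAgainst (hσ : Game.EveWinningStrat N.letterGame σ) (hw : w ∈ N.Lang) :
    ParityAccept fun n => N.prio (N.playAgainst σ w n).e1 :=
  ((eveWinsPlay_playAgainst w hσ).2.2.2 (roundLegal_playAgainst w hσ)).resolve_left
    (not_not.2 hw)

end NPA

section Breakpoint

variable {Q A : Type} (F : Set (Q × A × Q))

def reach (S : Set Q) (b : Q → Set Q) : Set Q := {q' | ∃ q ∈ S, q' ∈ b q}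

/-- The states that still owe a visit to `F`. -/
def pending (O : Set Q) (a : A) (b : Q → Set Q) : Set Q :=
  {q' | ∃ q ∈ O, q' ∈ b q ∧ (q, a, q') ∉ F}

/-- The transition of `breakpointNBW` on the box `b`, which its `dst` unfolds to. -/
def breakpointStep (P : Set Q × Set Q) (a : A) (b : Q → Set Q) : Set Q × Set Q :=
  (reach P.1 b, if pending F P.2 a b = ∅ then reach P.1 b else pending F P.2 a b)

/-- A predecessor of `q'` in the breakpoint step. Preferring one in `O` reached outside `F`
keeps the parent pointers inside `O` between breakpoints. -/
noncomputable def parent (P : Set Q × Set Q) (a : A) (b : Q → Set Q) (q' : Q) : Q :=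
  if h : ∃ q ∈ P.2, q' ∈ b q ∧ (q, a, q') ∉ F then h.choose
  else if h : ∃ q ∈ P.1, q' ∈ b q then h.choose else q'

variable {F} {P : Set Q × Set Q} {a : A} {b : Q → Set Q}

theorem breakpointStep_snd_subset (hP : P.2 ⊆ P.1) :
    (breakpointStep F P a b).2 ⊆ (breakpointStep F P a b).1 := by
  unfold breakpointStep
  split_ifs
  · exact subset_rfl
  · rintro q' ⟨q, hq, hq', -⟩
    exact ⟨q, hP hq, hq'⟩

theorem breakpointStep_snd_of_ne (h : pending F P.2 a b ≠ ∅) :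
    (breakpointStep F P a b).2 = pending F P.2 a b :=
  if_neg h

theorem parent_spec_of_mem_pending {q' : Q} (h : q' ∈ pending F P.2 a b) :
    parent F P a b q' ∈ P.2 ∧ q' ∈ b (parent F P a b q') ∧ (parent F P a b q', a, q') ∉ F := by
  have h' : ∃ q ∈ P.2, q' ∈ b q ∧ (q, a, q') ∉ F := h
  rw [parent, dif_pos h']
  exact h'.choose_spec

theorem parent_spec_of_mem_reach {q' : Q} (hP : P.2 ⊆ P.1) (h : q' ∈ reach P.1 b) :
    parent F P a b q' ∈ P.1 ∧ q' ∈ b (parent F P a b q') := by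
  unfold parent
  split_ifs with hO hS
  · exact ⟨hP hO.choose_spec.1, hO.choose_spec.2.1⟩
  · exact hS.choose_spec
  · exact absurd h hS

end Breakpoint

namespace AltAut

variable {A : Type} (M : AltAut A) (F : Set (M.Q × A × M.Q))

def breakpoints : Set (breakpointNBW M F).T := {t | pending F t.1.2 t.2.val.1 t.2.val.2 = ∅}

theorem breakpointNBW_parityAccept_iff (r : ℕ → (breakpointNBW M F).T) :
    ParityAccept (fun n => (breakpointNBW M F).prio (r n)) ↔ InfOftenIn r (M.breakpoints F) :=
  parityAccept_ite_iff r (M.breakpoints F)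

variable {M F}

/-- Between two breakpoints a path avoiding `F` would stay in `O`, which the second breakpoint
empties. -/
theorem infOftenIn_of_accepting_run {w : ℕ → A} {r : ℕ → (breakpointNBW M F).T}
    (hr : (breakpointNBW M F).IsRun w r) (hacc : InfOftenIn r (M.breakpoints F))
    {π : ℕ → M.Q} (hπ0 : π 0 = M.init) (hπ : ∀ n, π (n + 1) ∈ (r n).2.val.2 (π n)) :
    InfOftenIn (fun n => (π n, w n, π (n + 1))) F := by
  obtain ⟨hr0, hrstep, hrlab⟩ := hr
  have hstep (n : ℕ) : (r (n + 1)).1 = breakpointStep F (r n).1 (w n) (r n).2.val.2 := by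
    rw [← hrlab n]
    exact hrstep n
  have hbp {n : ℕ} (h : r n ∈ M.breakpoints F) : pending F (r n).1.2 (w n) (r n).2.val.2 = ∅ := by
    rw [← hrlab n]
    exact h
  have hS (n : ℕ) : π n ∈ (r n).1.1 := by
    induction n with
    | zero => exact (congrArg (π 0 ∈ ·.1) hr0).mpr hπ0
    | succ n ih => rw [hstep]; exact ⟨π n, ih, hπ n⟩
  intro K
  by_contra! hK
  obtain ⟨m, hKm, hm⟩ := hacc K
  have hO (k : ℕ) : π (m + 1 + k) ∈ (r (m + 1 + k)).1.2 := by
    induction k with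
    | zero =>
      have h := hS (m + 1)
      rw [hstep] at h ⊢
      rwa [breakpointStep, if_pos (hbp hm)]
    | succ k ih =>
      have hp : π (m + 1 + k + 1) ∈ pending F (r (m + 1 + k)).1.2 (w _) (r _).2.val.2 :=
        ⟨_, ih, hπ _, hK _ (by omega)⟩
      rw [← Nat.add_assoc, hstep, breakpointStep_snd_of_ne (Set.nonempty_iff_ne_empty.1 ⟨_, hp⟩)]
      exact hp
  obtain ⟨m', hm', hbm'⟩ := hacc (m + 1)
  obtain ⟨k, rfl⟩ := Nat.exists_eq_add_of_le hm'
  have hp : π (m + 1 + k + 1) ∈ pending F (r (m + 1 + k)).1.2 (w _) (r _).2.val.2 :=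
    ⟨_, hO k, hπ _, hK _ (by omega)⟩
  rw [hbp hbm'] at hp
  exact hp

theorem mem_lang_of_mem_breakpointNBW_lang (hF : M.IsBuchi F) {w : ℕ → A}
    (hw : w ∈ (breakpointNBW M F).Lang) : w ∈ M.Lang := by
  obtain ⟨r, hr, hacc⟩ := hw
  refine ⟨⟨fun _ p _ => (r p.1).2.val.2 p.2, fun _ _ _ _ _ => (), fun _ _ _ _ _ _ _ => ()⟩,
    fun ρ hSt hC => ?_⟩
  have hst (n : ℕ) : (ρ n).st.1 = n := by
    induction n with
    | zero => rw [hSt.1]; rfl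
    | succ n ih => rw [hSt.2 n]; exact congrArg (· + 1) ih
  have hpath (n : ℕ) : (ρ n).a2 = (ρ (n + 1)).st.2 := by rw [hSt.2 n]; rfl
  have he1 (n : ℕ) : (ρ n).e1 = (r n).2.val.2 (ρ n).st.2 := by
    rw [(hC n).1]
    dsimp only
    rw [hst]
  refine ⟨fun n _ _ => ?_, fun _ _ _ _ _ => trivial, fun _ _ _ _ _ _ _ => trivial, fun hleg => ?_⟩
  · show (ρ n).e1 ∈ PosBool.eveRes (M.delta (ρ n).st.2 (w (ρ n).st.1))
    rw [he1, hst, ← hr.2.2 n]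
    exact (r n).2.2 _
  · show M.acc fun n => ((ρ n).st.2, w n, (ρ n).a2)
    rw [hF]
    simp only [hpath]
    refine infOftenIn_of_accepting_run (π := fun n => (ρ n).st.2) hr
      ((breakpointNBW_parityAccept_iff M F r).1 hacc) (by rw [hSt.1]; rfl) fun n => ?_
    rw [← hpath, ← he1]
    exact (hleg n).2.2.1

/-- Eve's resolutions of the disjunctions along the paths of `M`, depending on a memory `H` that
is updated along every transition. -/
structure MemStrategy (M : AltAut A) (H : Type) where
  mem₀ : H
  update : ℕ → A → H → M.Q → M.Q → H
  box : ℕ → A → H → M.Q → Set M.Q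
  box_mem : ∀ n a h q, box n a h q ∈ (M.delta q a).eveRes

namespace MemStrategy

variable {H : Type} (κ : M.MemStrategy H) (F) (w : ℕ → A)

def memAlong (π : ℕ → M.Q) : ℕ → H
  | 0 => κ.mem₀
  | n + 1 => κ.update n (w n) (memAlong π n) (π n) (π (n + 1))

def Follows (π : ℕ → M.Q) : Prop :=
  π 0 = M.init ∧ ∀ n, π (n + 1) ∈ κ.box n (w n) (κ.memAlong w π n) (π n)

noncomputable def trackStep (n : ℕ) (a : A) (T : (Set M.Q × Set M.Q) × (M.Q → H)) :
    (Set M.Q × Set M.Q) × (M.Q → H) :=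
  let b q := κ.box n a (T.2 q) q
  let p := parent F T.1 a b
  (breakpointStep F T.1 a b, fun q' => κ.update n a (T.2 (p q')) (p q') q')

/-- The breakpoint construction along `w` with the boxes of `κ`; each state of `S` carries the
memory of `κ` along the path to it through `parent`. -/
noncomputable def track : ℕ → (Set M.Q × Set M.Q) × (M.Q → H)
  | 0 => (({M.init}, ∅), fun _ => κ.mem₀)
  | n + 1 => κ.trackStep F n (w n) (track n)

noncomputable def boxAt (n : ℕ) : M.Boxes :=
  ⟨(w n, fun q => κ.box n (w n) ((κ.track F w n).2 q) q), fun q => κ.box_mem _ _ _ q⟩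

noncomputable def run (n : ℕ) : (breakpointNBW M F).T := ((κ.track F w n).1, κ.boxAt F w n)

noncomputable def parentAt (n : ℕ) : M.Q → M.Q :=
  parent F (κ.track F w n).1 (w n) (κ.boxAt F w n).val.2

theorem run_isRun : (breakpointNBW M F).IsRun w (κ.run F w) :=
  ⟨rfl, fun _ => rfl, fun _ => rfl⟩

theorem track_snd_subset : ∀ n, (κ.track F w n).1.2 ⊆ (κ.track F w n).1.1
  | 0 => Set.empty_subset _
  | n + 1 => breakpointStep_snd_subset (track_snd_subset n)

variable {w} in
theorem track_congr {w' : ℕ → A} : ∀ {n}, (∀ k < n, w k = w' k) →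
    κ.track F w n = κ.track F w' n
  | 0, _ => rfl
  | n + 1, h => by
    simp only [track, track_congr fun k hk => h k (Nat.lt_succ_of_lt hk), h n n.lt_succ_self]

variable {w} in
theorem boxAt_congr {w' : ℕ → A} {n : ℕ} (h : ∀ k ≤ n, w k = w' k) :
    κ.boxAt F w n = κ.boxAt F w' n := by
  apply Subtype.ext
  simp only [boxAt, κ.track_congr F fun k hk => h k hk.le, h n le_rfl]

variable {κ F w}

theorem parentAt_spec {n : ℕ} {q' : M.Q} (hq' : q' ∈ (κ.track F w (n + 1)).1.1) :
    κ.parentAt F w n q' ∈ (κ.track F w n).1.1 ∧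
      q' ∈ (κ.boxAt F w n).val.2 (κ.parentAt F w n q') :=
  parent_spec_of_mem_reach (κ.track_snd_subset F w n) hq'

theorem track_succ_snd_of_not_mem_breakpoints {n : ℕ} (hn : κ.run F w n ∉ M.breakpoints F) :
    (κ.track F w (n + 1)).1.2 = pending F (κ.track F w n).1.2 (w n) (κ.boxAt F w n).val.2 :=
  breakpointStep_snd_of_ne hn

theorem parentAt_spec_of_not_mem_breakpoints {n : ℕ} (hn : κ.run F w n ∉ M.breakpoints F)
    {q' : M.Q} (hq' : q' ∈ (κ.track F w (n + 1)).1.2) :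
    κ.parentAt F w n q' ∈ (κ.track F w n).1.2 ∧
      q' ∈ (κ.boxAt F w n).val.2 (κ.parentAt F w n q') ∧ (κ.parentAt F w n q', w n, q') ∉ F := by
  rw [track_succ_snd_of_not_mem_breakpoints hn] at hq'
  exact parent_spec_of_mem_pending hq'

theorem memAlong_eq_track {π : ℕ → M.Q} (hπ : ∀ n, κ.parentAt F w n (π (n + 1)) = π n) :
    ∀ n, κ.memAlong w π n = (κ.track F w n).2 (π n)
  | 0 => rfl
  | n + 1 => by
    rw [memAlong, memAlong_eq_track hπ n, ← hπ n]
    rfl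

/-- Otherwise, after the last breakpoint the parent pointers inside `O` form an infinite finitely
branching forest, and a branch of it is a path following `κ` that eventually avoids `F`. -/
theorem infOftenIn_run_breakpoints [Finite M.Q]
    (h : ∀ π, κ.Follows w π → InfOftenIn (fun n => (π n, w n, π (n + 1))) F) :
    InfOftenIn (κ.run F w) (M.breakpoints F) := by
  by_contra hno
  obtain ⟨N, hN⟩ : ∃ N, ∀ n, N ≤ n → κ.run F w n ∉ M.breakpoints F := by
    simpa [InfOftenIn] using hno
  let V (n : ℕ) : Set M.Q := if N < n then (κ.track F w n).1.2 else (κ.track F w n).1.1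
  have hV (n : ℕ) : V n = if N < n then (κ.track F w n).1.2 else (κ.track F w n).1.1 := rfl
  have hpar (n : ℕ) (q : M.Q) (hq : q ∈ V (n + 1)) : κ.parentAt F w n q ∈ V n ∧
      q ∈ (κ.boxAt F w n).val.2 (κ.parentAt F w n q) ∧
      (N ≤ n → (κ.parentAt F w n q, w n, q) ∉ F) := by
    by_cases hn : N ≤ n
    · rw [hV, if_pos (Nat.lt_succ_of_le hn)] at hq
      obtain ⟨h1, h2, h3⟩ := parentAt_spec_of_not_mem_breakpoints (hN n hn) hq
      refine ⟨?_, h2, fun _ => h3⟩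
      rw [hV]
      split_ifs
      exacts [h1, κ.track_snd_subset F w n h1]
    · rw [hV, if_neg (by omega)] at hq
      obtain ⟨h1, h2⟩ := parentAt_spec hq
      exact ⟨by rwa [hV, if_neg (by omega)], h2, fun h => absurd h hn⟩
  have hne (n : ℕ) : (V (n + N + 1)).Nonempty := by
    rw [hV, if_pos (by omega), track_succ_snd_of_not_mem_breakpoints (hN _ (by omega))]
    exact Set.nonempty_iff_ne_empty.2 (hN _ (by omega))
  obtain ⟨π, hπ⟩ := exists_branch (fun n q hq => (hpar n q hq).1)
    fun n => ⟨n + N + 1, by omega, hne n⟩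
  have hfollow : κ.Follows w π := by
    refine ⟨(hπ 0).1, fun n => ?_⟩
    rw [memAlong_eq_track fun n => (hπ n).2, ← (hπ n).2]
    exact (hpar n _ (hπ (n + 1)).1).2.1
  obtain ⟨m, hm, hmF⟩ := h π hfollow N
  exact (hpar m _ (hπ (m + 1)).1).2.2 hm (by rwa [(hπ m).2])

end MemStrategy

noncomputable def mcMemStrategy (σ : Game.EStrat (ℕ × M.Q) Unit (Set M.Q) M.Q Unit Unit Unit) :
    M.MemStrategy (List (GameRound (ℕ × M.Q) Unit (Set M.Q) M.Q Unit Unit Unit)) where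
  mem₀ := []
  update n _ h q q' := h ++ [⟨(n, q), (), σ.f1 h (n, q) (), q', (), (), ()⟩]
  box n a h q := (M.delta q a).eveResOr (σ.f1 h (n, q) ())
  box_mem _ _ _ _ := PosBool.eveResOr_mem _ _

theorem acc_of_follows_mcMemStrategy {w : ℕ → A}
    {σ : Game.EStrat (ℕ × M.Q) Unit (Set M.Q) M.Q Unit Unit Unit}
    (hσ : Game.EveWinningStrat (M.mcGame w) σ) {π : ℕ → M.Q}
    (hπ : (mcMemStrategy σ).Follows w π) : M.acc fun n => (π n, w n, π (n + 1)) := by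
  let h := (mcMemStrategy σ).memAlong w π
  let ρ (n : ℕ) : GameRound (ℕ × M.Q) Unit (Set M.Q) M.Q Unit Unit Unit :=
    ⟨(n, π n), (), σ.f1 (h n) (n, π n) (), π (n + 1), (), (), ()⟩
  have hhist (n : ℕ) : Game.hist ρ n = h n := by
    induction n with
    | zero => rfl
    | succ n ih => rw [Game.hist_succ, ih]; rfl
  have hwin := hσ ρ ⟨show ((0 : ℕ), π 0) = (0, M.init) by rw [hπ.1], fun _ => rfl⟩
    fun n => ⟨by rw [hhist], rfl, rfl⟩
  refine hwin.2.2.2 (hwin.roundLegal (fun _ => trivial) (fun n he1 => ?_) fun _ => trivial)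
  have hbox : π (n + 1) ∈ (M.delta (π n) (w n)).eveResOr (σ.f1 (h n) (n, π n) ()) := hπ.2 n
  rwa [PosBool.eveResOr_of_mem he1] at hbox

noncomputable def letterMemStrategy (σ : Game.EStrat M.Q A (Set M.Q) M.Q Unit Unit Unit) :
    M.MemStrategy (List (GameRound M.Q A (Set M.Q) M.Q Unit Unit Unit)) where
  mem₀ := []
  update _ a h q q' := h ++ [⟨q, a, σ.f1 h q a, q', (), (), ()⟩]
  box _ a h q := (M.delta q a).eveResOr (σ.f1 h q a)
  box_mem _ _ _ _ := PosBool.eveResOr_mem _ _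

theorem not_mem_lang_or_acc_of_follows_letterMemStrategy {w : ℕ → A}
    {σ : Game.EStrat M.Q A (Set M.Q) M.Q Unit Unit Unit}
    (hσ : Game.EveWinningStrat M.eLetterGame σ) {π : ℕ → M.Q}
    (hπ : (letterMemStrategy σ).Follows w π) :
    w ∉ M.Lang ∨ M.acc fun n => (π n, w n, π (n + 1)) := by
  let h := (letterMemStrategy σ).memAlong w π
  let ρ (n : ℕ) : GameRound M.Q A (Set M.Q) M.Q Unit Unit Unit :=
    ⟨π n, w n, σ.f1 (h n) (π n) (w n), π (n + 1), (), (), ()⟩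
  have hhist (n : ℕ) : Game.hist ρ n = h n := by
    induction n with
    | zero => rfl
    | succ n ih => rw [Game.hist_succ, ih]; rfl
  have hwin := hσ ρ ⟨hπ.1, fun _ => rfl⟩ fun n => ⟨by rw [hhist], rfl, rfl⟩
  refine hwin.2.2.2 (hwin.roundLegal (fun _ => trivial) (fun n he1 => ?_) fun _ => trivial)
  have hbox : π (n + 1) ∈ (M.delta (π n) (w n)).eveResOr (σ.f1 (h n) (π n) (w n)) := hπ.2 n
  rwa [PosBool.eveResOr_of_mem he1] at hbox

theorem mem_breakpointNBW_lang_of_mem_lang [Finite M.Q] (hF : M.IsBuchi F) {w : ℕ → A}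
    (hw : w ∈ M.Lang) : w ∈ (breakpointNBW M F).Lang := by
  obtain ⟨σ, hσ⟩ := hw
  refine ⟨_, (mcMemStrategy σ).run_isRun F w, (breakpointNBW_parityAccept_iff M F _).2 ?_⟩
  exact (mcMemStrategy σ).infOftenIn_run_breakpoints fun π hπ =>
    (hF _).1 (acc_of_follows_mcMemStrategy hσ hπ)

theorem breakpointNBW_lang [Finite M.Q] (hF : M.IsBuchi F) : (breakpointNBW M F).Lang = M.Lang :=
  Set.ext fun _ => ⟨mem_lang_of_mem_breakpointNBW_lang hF, mem_breakpointNBW_lang_of_mem_lang hF⟩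

theorem breakpointNBW_GFG_of_existsGFG [Finite M.Q] (hF : M.IsBuchi F) (h : M.ExistsGFG) :
    (breakpointNBW M F).GFG := by
  obtain ⟨σ, hσ⟩ := h
  let κ := letterMemStrategy σ
  refine ⟨⟨fun hist s a => (s, κ.boxAt F (Game.wordSoFar hist a) hist.length),
    fun _ _ _ _ _ => (), fun _ _ _ _ _ _ _ => ()⟩, fun ρ hSt hC => ?_⟩
  let w (n : ℕ) := (ρ n).a1
  have he1 (n : ℕ) : (ρ n).e1 = ((ρ n).st, κ.boxAt F w n) := by
    rw [(hC n).1]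
    dsimp only
    rw [Game.length_hist, κ.boxAt_congr F fun k hk => Game.wordSoFar_hist ρ hk]
    rfl
  have hst (n : ℕ) : (ρ n).st = (κ.track F w n).1 := by
    induction n with
    | zero => exact hSt.1
    | succ n ih =>
      rw [hSt.2 n]
      show (breakpointNBW M F).dst (ρ n).e1 = _
      rw [he1, ih]
      rfl
  have hrun : (fun n => (ρ n).e1) = κ.run F w := funext fun n => by rw [he1, hst]; rfl
  refine ⟨fun n _ _ => ⟨by rw [he1]; rfl, by rw [he1]; rfl⟩, fun _ _ _ _ _ => trivial,
    fun _ _ _ _ _ _ _ => trivial, fun _ => ?_⟩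
  show w ∉ (breakpointNBW M F).Lang ∨ ParityAccept fun n => (breakpointNBW M F).prio (ρ n).e1
  rw [breakpointNBW_lang hF, or_iff_not_imp_left, not_not,
    breakpointNBW_parityAccept_iff M F (fun n => (ρ n).e1), hrun]
  exact fun hw => κ.infOftenIn_run_breakpoints fun π hπ => (hF _).1
    ((not_mem_lang_or_acc_of_follows_letterMemStrategy hσ hπ).resolve_left (not_not.2 hw))

theorem existsGFG_of_breakpointNBW_GFG [Finite M.Q] (hF : M.IsBuchi F)
    (h : (breakpointNBW M F).GFG) : M.ExistsGFG := by
  obtain ⟨σ, hσ⟩ := h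
  let B := breakpointNBW M F
  refine ⟨⟨fun hist q a => (M.delta q a).eveResOr
      ((B.playAgainst σ (Game.wordSoFar hist a) hist.length).e1.2.val.2 q),
    fun _ _ _ _ _ => (), fun _ _ _ _ _ _ _ => ()⟩, fun ρ hSt hC => ?_⟩
  let w (n : ℕ) := (ρ n).a1
  let r (n : ℕ) := (B.playAgainst σ w n).e1
  have hr : B.IsRun w r := NPA.isRun_playAgainst w hσ
  have hbox (n : ℕ) (q : M.Q) : (r n).2.val.2 q ∈ (M.delta q (w n)).eveRes := by
    rw [← hr.2.2 n]
    exact (r n).2.2 q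
  have he1 (n : ℕ) : (ρ n).e1 = (r n).2.val.2 (ρ n).st := by
    rw [(hC n).1]
    dsimp only
    rw [Game.length_hist, B.playAgainst_congr σ fun k hk => Game.wordSoFar_hist ρ hk]
    exact PosBool.eveResOr_of_mem (hbox n _)
  have hpath (n : ℕ) : (ρ n).a2 = (ρ (n + 1)).st := (hSt.2 n).symm
  refine ⟨fun n _ _ => (he1 n).symm ▸ hbox n _, fun _ _ _ _ _ => trivial,
    fun _ _ _ _ _ _ _ => trivial, fun hleg => ?_⟩
  show w ∉ M.Lang ∨ M.acc fun n => ((ρ n).st, w n, (ρ n).a2)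
  rw [or_iff_not_imp_left, not_not, hF]
  intro hw
  simp only [hpath]
  have hacc := NPA.parityAccept_playAgainst w hσ (by rwa [breakpointNBW_lang hF])
  refine infOftenIn_of_accepting_run hr ((breakpointNBW_parityAccept_iff M F r).1 hacc) hSt.1
    fun n => ?_
  rw [← hpath, ← he1]
  exact (hleg n).2.2.1

end AltAut

theorem existsGFG_iff_breakpoint_GFG_general
    (Alph : Type) (M : AltAut Alph) [Finite M.Q]
    (F : Set (M.Q × Alph × M.Q)) (hF : M.IsBuchi F) :
    M.ExistsGFG ↔ (breakpointNBW M F).GFG :=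
  ⟨AltAut.breakpointNBW_GFG_of_existsGFG hF, AltAut.existsGFG_of_breakpointNBW_GFG hF⟩

theorem existsGFG_iff_breakpoint_GFG
    (Alph : Type) (M : AltAut Alph) [Finite Alph] [Finite M.Q]
    (F : Set (M.Q × Alph × M.Q)) (hF : M.IsBuchi F) :
    M.ExistsGFG ↔ (breakpointNBW M F).GFG :=
  existsGFG_iff_breakpoint_GFG_general Alph M F hF
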